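/- arXiv:1511.04913 — 3 statements merged into one kernel-verified Lean document; each statement's English description precedes it below -/
import Mathlib

section
/- Let G be a locally profinite group, P a closed subgroup, and U ⊆ G an open compact subgroup with G = PU. Set U_P = P ∩ U. Assume the left Haar measures on G and P giving U and U_P volume 1 satisfy the Iwasawa integration formula ∫_G f(g) dg = ∫_U ∫_P f(pu) dp du. Then restriction of functions r_P : H(G,U) → H(P,U_P) is a ring homomorphism. -/
/-!
STATEMENT 3: Let `G` be a locally profinite group, `P` a closed subgroup, and `U ⊆ G` open
compact with `G = PU`; set `U_P = P ∩ U`.  Assume the left Haar measures on `G` and `P` giving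
`U` and `U_P` volume 1 satisfy the Iwasawa integration formula
`∫_G f(g) dg = ∫_U ∫_P f(pu) dp du`.  Then restriction of functions
`r_P : H(G,U) → H(P,U_P)` is a ring homomorphism.
-/

open MeasureTheory

/-- A compactly supported, `U`-bi-invariant, ℤ-valued function (an element of `H(G,U)`). -/
def IsHeckeFunction {G : Type*} [Group G] [TopologicalSpace G] (U : Subgroup G)
    (f : G → ℤ) : Prop :=
  HasCompactSupport f ∧ ∀ u₁ ∈ U, ∀ u₂ ∈ U, ∀ g : G, f (u₁ * g * u₂) = f g

/-- Convolution with respect to a measure. -/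
noncomputable def heckeConv {G : Type*} [Group G] [MeasurableSpace G]
    (μ : Measure G) (f₁ f₂ : G → ℝ) : G → ℝ :=
  fun g => ∫ x, f₁ x * f₂ (x⁻¹ * g) ∂μ

/-!
The integrand `x ↦ f₁ x * f₂ (x⁻¹ * γ)` of a convolution of two Hecke functions is right
`U`-invariant, hence locally constant, and it is compactly supported, so the Iwasawa formula
applies to it. Right `U`-invariance also makes the inner integral `∫_P F(pu) dp` independent of
`u ∈ U`; as `U` has volume 1, the outer integral over `U` returns `∫_P F(p) dp`, which is the
convolution over `P` of the restrictions.
-/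

theorem IsLocallyConstant.of_mul_mem_right {G α : Type*} [Group G] [TopologicalSpace G]
    [ContinuousMul G] {U : Subgroup G} (hU : IsOpen (U : Set G)) {f : G → α}
    (hf : ∀ g, ∀ u ∈ U, f (g * u) = f g) : IsLocallyConstant f := by
  refine IsLocallyConstant.iff_exists_open _ |>.mpr fun g => ?_
  refine ⟨(g * ·) '' U, (Homeomorph.mulLeft g).isOpenMap _ hU, ⟨1, U.one_mem, mul_one g⟩, ?_⟩
  rintro _ ⟨u, hu, rfl⟩
  exact hf g u hu

theorem setIntegral_integral_mul_of_mul_mem_right {G : Type*} [Group G] [MeasurableSpace G]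
    {P U : Subgroup G} (hU : MeasurableSet (U : Set G)) (μ : Measure G) (ν : Measure P)
    {f : G → ℝ} (hf : ∀ g, ∀ u ∈ U, f (g * u) = f g) :
    ∫ u in (U : Set G), (∫ p : P, f (p * u) ∂ν) ∂μ = μ.real U * ∫ p : P, f p ∂ν := by
  rw [setIntegral_congr_fun hU (g := fun _ => ∫ p : P, f p ∂ν) fun u hu =>
    integral_congr_ae <| .of_forall fun p => hf p u hu, setIntegral_const, smul_eq_mul]

namespace IsHeckeFunction

variable {G : Type*} [Group G] [TopologicalSpace G] {U : Subgroup G} {f : G → ℤ}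

theorem apply_mul_of_mem (hf : IsHeckeFunction U f) (g : G) {u : G} (hu : u ∈ U) :
    f (g * u) = f g := by
  simpa using hf.2 1 U.one_mem u hu g

theorem apply_mem_mul (hf : IsHeckeFunction U f) (g : G) {u : G} (hu : u ∈ U) :
    f (u * g) = f g := by
  simpa using hf.2 u hu 1 U.one_mem g

theorem convIntegrand_mul_mem_right {f₁ f₂ : G → ℤ} (hf₁ : IsHeckeFunction U f₁)
    (hf₂ : IsHeckeFunction U f₂) (γ x : G) {u : G} (hu : u ∈ U) :
    ((f₁ (x * u) : ℝ) * f₂ ((x * u)⁻¹ * γ)) = f₁ x * f₂ (x⁻¹ * γ) := by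
  rw [hf₁.apply_mul_of_mem x hu, mul_inv_rev, mul_assoc, hf₂.apply_mem_mul _ (U.inv_mem hu)]

end IsHeckeFunction

theorem stmt_3_general {G : Type*} [Group G] [TopologicalSpace G] [IsTopologicalGroup G]
    [MeasurableSpace G] [BorelSpace G]
    (P : Subgroup G)
    (U : Subgroup G) (hUopen : IsOpen (U : Set G))
    -- left Haar measures on `G` and on `P`, normalized on `U` resp. `U_P = P ∩ U`
    (μ : Measure G)
    (hμU : μ (U : Set G) = 1)
    (ν : Measure ↥P)
    -- the Iwasawa integration formula `∫_G f dg = ∫_U ∫_P f(pu) dp du`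
    (hIwasawa : ∀ f : G → ℝ, Continuous f → HasCompactSupport f →
      ∫ g, f g ∂μ = ∫ u in (U : Set G), (∫ p : ↥P, f ((p : G) * u) ∂ν) ∂μ) :
    -- restriction of functions is multiplicative: for Hecke functions `f₁, f₂ ∈ H(G,U)`,
    -- the convolution over `P` of the restrictions equals the restriction of the
    -- convolution over `G` …
    (∀ f₁ f₂ : G → ℤ, IsHeckeFunction U f₁ → IsHeckeFunction U f₂ →
      ∀ γ : ↥P,
        heckeConv ν (fun p : ↥P => (f₁ (p : G) : ℝ)) (fun p : ↥P => (f₂ (p : G) : ℝ)) γ =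
          heckeConv μ (fun x => (f₁ x : ℝ)) (fun x => (f₂ x : ℝ)) (γ : G)) ∧
    -- … and it sends the unit `[U]` to the unit `[U_P]`
    (∀ p : ↥P, Set.indicator (U : Set G) (fun _ => (1 : ℤ)) (p : G) =
      Set.indicator {q : ↥P | (q : G) ∈ U} (fun _ => (1 : ℤ)) p) := by
  refine ⟨fun f₁ f₂ hf₁ hf₂ γ => ?_, fun p => rfl⟩
  set F : G → ℝ := fun x => f₁ x * f₂ (x⁻¹ * γ)
  have hF : ∀ g, ∀ u ∈ U, F (g * u) = F g := fun g _ hu =>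
    hf₁.convIntegrand_mul_mem_right hf₂ γ g hu
  have hF_cont : Continuous F := (IsLocallyConstant.of_mul_mem_right hUopen hF).continuous
  have hF_supp : HasCompactSupport F :=
    (hf₁.1.comp_left (g := ((↑) : ℤ → ℝ)) Int.cast_zero).mul_right
  calc heckeConv ν _ _ γ = μ.real U * ∫ p : P, F p ∂ν := by
        rw [measureReal_def, hμU, ENNReal.toReal_one, one_mul]; rfl
    _ = ∫ g, F g ∂μ := by
        rw [hIwasawa F hF_cont hF_supp,
          setIntegral_integral_mul_of_mul_mem_right hUopen.measurableSet μ ν hF]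

theorem stmt_3 {G : Type*} [Group G] [TopologicalSpace G] [IsTopologicalGroup G]
    [LocallyCompactSpace G] [TotallyDisconnectedSpace G] [T2Space G]
    [MeasurableSpace G] [BorelSpace G]
    (P : Subgroup G) (hP : IsClosed (P : Set G))
    (U : Subgroup G) (hUopen : IsOpen (U : Set G)) (hUcompact : IsCompact (U : Set G))
    (hPU : ∀ g : G, ∃ p ∈ P, ∃ u ∈ U, g = p * u)
    -- left Haar measures on `G` and on `P`, normalized on `U` resp. `U_P = P ∩ U`
    (μ : Measure G) [μ.IsMulLeftInvariant] [IsFiniteMeasureOnCompacts μ]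
    (hμU : μ (U : Set G) = 1)
    (ν : Measure ↥P) [ν.IsMulLeftInvariant] [IsFiniteMeasureOnCompacts ν]
    (hνUP : ν {p : ↥P | (p : G) ∈ U} = 1)
    -- the Iwasawa integration formula `∫_G f dg = ∫_U ∫_P f(pu) dp du`
    (hIwasawa : ∀ f : G → ℝ, Continuous f → HasCompactSupport f →
      ∫ g, f g ∂μ = ∫ u in (U : Set G), (∫ p : ↥P, f ((p : G) * u) ∂ν) ∂μ) :
    -- restriction of functions is multiplicative: for Hecke functions `f₁, f₂ ∈ H(G,U)`,
    -- the convolution over `P` of the restrictions equals the restriction of the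
    -- convolution over `G` …
    (∀ f₁ f₂ : G → ℤ, IsHeckeFunction U f₁ → IsHeckeFunction U f₂ →
      ∀ γ : ↥P,
        heckeConv ν (fun p : ↥P => (f₁ (p : G) : ℝ)) (fun p : ↥P => (f₂ (p : G) : ℝ)) γ =
          heckeConv μ (fun x => (f₁ x : ℝ)) (fun x => (f₂ x : ℝ)) (γ : G)) ∧
    -- … and it sends the unit `[U]` to the unit `[U_P]`
    (∀ p : ↥P, Set.indicator (U : Set G) (fun _ => (1 : ℤ)) (p : G) =
      Set.indicator {q : ↥P | (q : G) ∈ U} (fun _ => (1 : ℤ)) p) :=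
  stmt_3_general P U hUopen μ hμU ν hIwasawa
end

section
/- Let G be a locally profinite group, P ⊆ G a closed subgroup with G = PU and U_P = P ∩ U for an open compact U ⊆ G. Let W be a ℤ[P]-module and V = Ind_P^G W the induced module of functions f : G → W with f(pg) = p·f(g). Then evaluation at the identity gives an isomorphism of abelian groups V^U ≅ W^{U_P}, and for α ∈ P with UαU = ⊔ᵢ αᵢU (αᵢ ∈ P), the Hecke operator [UαU] on V^U corresponds to the operator Σᵢ [αᵢ U_P] on W^{U_P}. -/
open scoped Pointwise

/-!
Since `G = PU`, a `P`-equivariant, right `U`-invariant function is determined by its value at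
`1` through `f (p * u) = p • f 1`. Conversely, a vector `w` fixed by `P ∩ U` extends to such a
function by the same formula, which is well defined because `p * u = q * v` forces
`q⁻¹ * p = v * u⁻¹ ∈ P ∩ U`. The Hecke formula is equivariance at the points `αᵢ ∈ P`.
-/

namespace InducedRepresentation

variable {G W : Type*} [Group G] {P U : Subgroup G} [MulAction P W]

theorem smul_eq_smul_of_mul_eq_mul {w : W} (hw : ∀ p : P, (p : G) ∈ U → p • w = w)
    {p q : P} {u v : G} (hu : u ∈ U) (hv : v ∈ U) (h : (p : G) * u = q * v) :
    p • w = q • w := by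
  have hqp : ((q⁻¹ * p : P) : G) = v * u⁻¹ := by
    rw [Subgroup.coe_mul, Subgroup.coe_inv, inv_mul_eq_iff_eq_mul, ← mul_assoc, ← h,
      mul_inv_cancel_right]
  calc p • w = q • (q⁻¹ * p) • w := by rw [smul_smul, mul_inv_cancel_left]
    _ = q • w := by rw [hw _ (hqp ▸ U.mul_mem hv (U.inv_mem hu))]

theorem apply_coe_eq_smul {f : G → W} (hf : ∀ (p : P) (g : G), f (p * g) = p • f g) (p : P) :
    f p = p • f 1 := by
  simpa using hf p 1

theorem apply_mul_eq_smul {f : G → W} (hf : ∀ (p : P) (g : G), f (p * g) = p • f g)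
    (hfU : ∀ u ∈ U, ∀ x : G, f (x * u) = f x) (p : P) {u : G} (hu : u ∈ U) :
    f (p * u) = p • f 1 := by
  rw [hfU u hu, apply_coe_eq_smul hf]

/-- The function `p * u ↦ p • w`, for a choice of factorization of each point of `G = PU`. -/
noncomputable def extend (hPU : ∀ g : G, ∃ p ∈ P, ∃ u ∈ U, g = p * u) (w : W) (g : G) : W :=
  (⟨(hPU g).choose, (hPU g).choose_spec.1⟩ : P) • w

section Extend

variable (hPU : ∀ g : G, ∃ p ∈ P, ∃ u ∈ U, g = p * u) {w : W}

theorem extend_eq_smul (hw : ∀ p : P, (p : G) ∈ U → p • w = w) {g : G} {q : P} {v : G}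
    (hv : v ∈ U) (hg : g = q * v) :
    extend hPU w g = q • w := by
  obtain ⟨_, u, hu, hgu⟩ := (hPU g).choose_spec
  exact smul_eq_smul_of_mul_eq_mul hw hu hv (hgu.symm.trans hg)

theorem extend_mul_left (hw : ∀ p : P, (p : G) ∈ U → p • w = w) (p : P) (g : G) :
    extend hPU w (p * g) = p • extend hPU w g := by
  obtain ⟨q, hq, v, hv, rfl⟩ := hPU g
  rw [extend_eq_smul hPU hw (q := ⟨q, hq⟩) hv rfl, ← mul_smul,
    extend_eq_smul hPU hw (q := p * ⟨q, hq⟩) hv (mul_assoc _ _ _).symm]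

theorem extend_mul_right (hw : ∀ p : P, (p : G) ∈ U → p • w = w) {u : G} (hu : u ∈ U) (g : G) :
    extend hPU w (g * u) = extend hPU w g := by
  obtain ⟨q, hq, v, hv, rfl⟩ := hPU g
  rw [extend_eq_smul hPU hw (q := ⟨q, hq⟩) hv rfl,
    extend_eq_smul hPU hw (q := ⟨q, hq⟩) (U.mul_mem hv hu) (mul_assoc _ _ _)]

theorem extend_one (hw : ∀ p : P, (p : G) ∈ U → p • w = w) : extend hPU w 1 = w := by
  rw [extend_eq_smul hPU hw (q := 1) U.one_mem (by simp), one_smul]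

end Extend

theorem bijOn_eval_one (hPU : ∀ g : G, ∃ p ∈ P, ∃ u ∈ U, g = p * u) :
    Set.BijOn (fun f : G → W => f 1)
      {f : G → W | (∀ (p : P) (g : G), f (p * g) = p • f g) ∧
        ∀ u ∈ U, ∀ x : G, f (x * u) = f x}
      {w : W | ∀ p : P, (p : G) ∈ U → p • w = w} := by
  refine ⟨fun f ⟨hf, hfU⟩ p hpU => ?_, fun f ⟨hf, hfU⟩ f' ⟨hf', hfU'⟩ h1 => ?_,
    fun w hw => ⟨extend hPU w, ⟨extend_mul_left hPU hw, fun u hu => extend_mul_right hPU hw hu⟩,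
      extend_one hPU hw⟩⟩
  · simpa [← apply_coe_eq_smul hf] using hfU p hpU 1
  · funext g
    obtain ⟨p, hp, u, hu, rfl⟩ := hPU g
    rw [apply_mul_eq_smul (p := ⟨p, hp⟩) hf hfU hu, apply_mul_eq_smul (p := ⟨p, hp⟩) hf' hfU' hu]
    exact congrArg _ h1

end InducedRepresentation

open InducedRepresentation in
theorem stmt_4_general {G : Type*} [Group G]
    (P : Subgroup G)
    (U : Subgroup G)
    (hPU : ∀ g : G, ∃ p ∈ P, ∃ u ∈ U, g = p * u)
    {W : Type*} [AddCommGroup W] [DistribMulAction ↥P W]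
    {m : ℕ} (a : Fin m → G) (haP : ∀ i, a i ∈ P) :
    -- evaluation at `1` is a bijection from
    -- `V^U = (Ind_P^G W)^U` (`P`-equivariant, right `U`-invariant functions `G → W`)
    -- onto `W^{U_P}`
    Set.BijOn (fun f : G → W => f 1)
      {f : G → W | (∀ (p : ↥P) (g : G), f ((p : G) * g) = p • f g) ∧
        ∀ u ∈ U, ∀ x : G, f (x * u) = f x}
      {w : W | ∀ p : ↥P, (p : G) ∈ U → p • w = w} ∧
    -- and under this bijection the Hecke operator `[UαU]` (whose value on `f ∈ V^U`,
    -- evaluated at `1`, is `Σᵢ f(αᵢ)`) corresponds to `Σᵢ [αᵢ U_P]`, i.e. `w ↦ Σᵢ αᵢ • w`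
    ∀ f : G → W, (∀ (p : ↥P) (g : G), f ((p : G) * g) = p • f g) →
      (∀ u ∈ U, ∀ x : G, f (x * u) = f x) →
      (∑ i, f (a i)) = ∑ i, (⟨a i, haP i⟩ : ↥P) • f 1 :=
  ⟨bijOn_eval_one hPU, fun _ hf _ =>
    Finset.sum_congr rfl fun i _ => apply_coe_eq_smul hf ⟨a i, haP i⟩⟩

theorem stmt_4 {G : Type*} [Group G] [TopologicalSpace G] [IsTopologicalGroup G]
    [LocallyCompactSpace G] [TotallyDisconnectedSpace G] [T2Space G]
    (P : Subgroup G) (hP : IsClosed (P : Set G))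
    (U : Subgroup G) (hUopen : IsOpen (U : Set G)) (hUcompact : IsCompact (U : Set G))
    (hPU : ∀ g : G, ∃ p ∈ P, ∃ u ∈ U, g = p * u)
    {W : Type*} [AddCommGroup W] [DistribMulAction ↥P W]
    (α : G) (hα : α ∈ P)
    {m : ℕ} (a : Fin m → G) (haP : ∀ i, a i ∈ P)
    (ha : (U : Set G) * {α} * (U : Set G) = ⋃ i, a i • (U : Set G))
    (ha' : Pairwise (Function.onFun Disjoint fun i => a i • (U : Set G))) :
    -- evaluation at `1` is a bijection from
    -- `V^U = (Ind_P^G W)^U` (`P`-equivariant, right `U`-invariant functions `G → W`)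
    -- onto `W^{U_P}`
    Set.BijOn (fun f : G → W => f 1)
      {f : G → W | (∀ (p : ↥P) (g : G), f ((p : G) * g) = p • f g) ∧
        ∀ u ∈ U, ∀ x : G, f (x * u) = f x}
      {w : W | ∀ p : ↥P, (p : G) ∈ U → p • w = w} ∧
    -- and under this bijection the Hecke operator `[UαU]` (whose value on `f ∈ V^U`,
    -- evaluated at `1`, is `Σᵢ f(αᵢ)`) corresponds to `Σᵢ [αᵢ U_P]`, i.e. `w ↦ Σᵢ αᵢ • w`
    ∀ f : G → W, (∀ (p : ↥P) (g : G), f ((p : G) * g) = p • f g) →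
      (∀ u ∈ U, ∀ x : G, f (x * u) = f x) →
      (∑ i, f (a i)) = ∑ i, (⟨a i, haP i⟩ : ↥P) • f 1 :=
  stmt_4_general P U hPU a haP
end

section
/- Let G₀ be a topological group and X a compact topological space with a continuous right G₀-action. Then for any G₀-equivariant sheaf F on X, the G₀-action on the global sections Γ(X, F) is smooth, i.e. every global section is fixed by an open subgroup of G₀. -/
/-!
Both `(x, g) ↦ g • s x` and `(x, g) ↦ s (g • x)` are continuous lifts of `(x, g) ↦ g • x`
through the local homeomorphism `π`, so they agree on an open subset of `X × G₀`, which
contains `X × {1}`. Since `X` is compact, the tube lemma gives a neighbourhood `V` of `1` with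
`X × V` inside that set. The elements `g` with `g • s = s ∘ (g • ·)` form a subgroup, and a
subgroup containing a neighbourhood of `1` is open.
-/

open Filter Topology

section Stabilizer

variable (G : Type*) {X E : Type*} [Group G] [MulAction G X] [MulAction G E]

def equivariantStabilizer (f : X → E) : Subgroup G where
  carrier := {g | ∀ x, g • f x = f (g • x)}
  one_mem' x := by simp only [one_smul]
  mul_mem' {g h} hg hh x := by rw [mul_smul, mul_smul, hh, hg]
  inv_mem' {g} hg x := by
    rw [inv_smul_eq_iff, hg, smul_inv_smul]

end Stabilizer

section Openness

variable {G X E : Type*} [Group G] [TopologicalSpace G] [TopologicalSpace X]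
  [MulAction G X] [MulAction G E]

theorem isOpen_setOf_smul_apply_eq_apply_smul [TopologicalSpace E]
    (hXcont : Continuous fun q : X × G => q.2 • q.1)
    (hEcont : Continuous fun q : E × G => q.2 • q.1)
    {π : E → X} (hπ : IsLocallyInjective π) (hequiv : ∀ (g : G) (e : E), π (g • e) = g • π e)
    {s : X → E} (hs : Continuous s) (hsec : ∀ x, π (s x) = x) :
    IsOpen {q : X × G | q.2 • s q.1 = s (q.2 • q.1)} :=
  hπ.isOpen_eqLocus (hEcont.comp ((hs.comp continuous_fst).prodMk continuous_snd))
    (hs.comp hXcont) (funext fun q => by simp only [Function.comp, hequiv, hsec])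

theorem equivariantStabilizer_mem_nhds_one [CompactSpace X] {f : X → E}
    (hopen : IsOpen {q : X × G | q.2 • f q.1 = f (q.2 • q.1)}) :
    (equivariantStabilizer G f : Set G) ∈ 𝓝 1 := by
  have hnhds : ∀ x ∈ (Set.univ : Set X), ∀ᶠ q : G × X in 𝓝 (1, x), q.1 • f q.2 = f (q.1 • q.2) :=
    fun x _ => (hopen.preimage continuous_swap).mem_nhds (by simp)
  filter_upwards [isCompact_univ.eventually_forall_of_forall_eventually
    (P := fun g x => g • f x = f (g • x)) hnhds] with g hg using fun x => hg x (Set.mem_univ x)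

end Openness

theorem stmt_10 {G₀ : Type*} [Group G₀] [TopologicalSpace G₀] [IsTopologicalGroup G₀]
    {X : Type*} [TopologicalSpace X] [CompactSpace X] [MulAction G₀ X]
    (hXcont : Continuous fun q : X × G₀ => q.2 • q.1)
    -- the étalé space of a `G₀`-equivariant sheaf `F` on `X`
    {E : Type*} [TopologicalSpace E] [MulAction G₀ E]
    (hEcont : Continuous fun q : E × G₀ => q.2 • q.1)
    (π : E → X) (hπ : IsLocalHomeomorph π)
    (hequiv : ∀ (g : G₀) (e : E), π (g • e) = g • π e)
    -- a global section `s ∈ Γ(X, F)`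
    (s : X → E) (hs : Continuous s) (hsec : ∀ x, π (s x) = x) :
    -- its stabilizer `{g | g • s = s}` is open in `G₀`
    IsOpen {g : G₀ | ∀ x : X, g • s x = s (g • x)} :=
  (equivariantStabilizer G₀ s).isOpen_of_mem_nhds <| equivariantStabilizer_mem_nhds_one <|
    isOpen_setOf_smul_apply_eq_apply_smul hXcont hEcont hπ.isLocallyInjective hequiv hs hsec
end
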